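/- (Sensitive dependence on initial conditions) Let f : ℝ × ℝ → ℝ be continuous and 1-periodic in the time variable, and suppose the equation x' = f(t,x) admits a solution x with x(t+2) = x(t) for all t ∈ ℝ and x(t₁+1) ≠ x(t₁) for some t₁ ∈ ℝ. Then there exists a compact subset W of C(ℝ,ℝ), consisting of solutions of x' = f(t,x) and invariant under the time-one shift ψ₁, such that ψ = ψ₁|_W is sensitive with respect to initial data on W: there exists δ > 0 such that for every w ∈ W and every ε > 0 there exist v ∈ W with ρ(v,w) < ε and a positive integer n with ρ(ψⁿ(v), ψⁿ(w)) ≥ δ. -/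

import Mathlib

/-- `x` is a (classical) solution of the ODE `x' = f(t,x)` on the whole real line. -/
def IsSolution (f : ℝ × ℝ → ℝ) (x : ℝ → ℝ) : Prop :=
  ∀ t : ℝ, HasDerivAt x (f (t, x t)) t

/-- The time-one shift `ψ₁` on `C(ℝ, ℝ)`: `shiftOne w = w (· + 1)`. -/
def shiftOne (w : C(ℝ, ℝ)) : C(ℝ, ℝ) :=
  w.comp ⟨fun t => t + 1, by continuity⟩

/-- `ϑ_m(f,g) = max {|f t - g t| : t ∈ [-m, m]}`. -/
noncomputable def theta (m : ℕ) (f g : C(ℝ, ℝ)) : ℝ :=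
  sSup ((fun t => |f t - g t|) '' Set.Icc (-(m : ℝ)) (m : ℝ))

/-- The metric `ρ(f,g) = Σ_{m=1}^∞ 2^{-m} ϑ_m(f,g)/(1 + ϑ_m(f,g))` of uniform
convergence on compact sets. -/
noncomputable def rho (f g : C(ℝ, ℝ)) : ℝ :=
  ∑' m : ℕ, (theta (m + 1) f g / (1 + theta (m + 1) f g)) / 2 ^ (m + 1)

/-!
The function `g t = x (t + 1) - x t` satisfies `g (t + 1) = - g t`, so it vanishes at some `t₀`,
and then at every `t₀ + n`, `n ∈ ℤ`. Since `f` is 1-periodic, `x` and `x (· + 1)` are both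
solutions, and they agree at every `t₀ + n`; choosing one of them on each interval
`[t₀ + n, t₀ + n + 1]` according to a sequence `s : ℤ → Bool` gives a solution. The map from the
Cantor space `ℤ → Bool` to these spliced solutions is continuous, so its range `W` is compact, and
because `x` is 2-periodic, `ψ₁` acts on it as the shift `s ↦ (n ↦ !s (n + 1))`. Flipping a sequence
far to the right moves its solution very little in `ρ`, but after enough shifts the flipped
region reaches the interval containing `t₁`, where the two solutions differ by
`|x (t₁ + 1) - x t₁| > 0`.
-/

open Set Filter Topology Function

lemma theta_nonneg (m : ℕ) (v w : C(ℝ, ℝ)) : 0 ≤ theta m v w :=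
  Real.sSup_nonneg (by rintro _ ⟨t, -, rfl⟩; positivity)

lemma abs_sub_le_theta {m : ℕ} {t : ℝ} (v w : C(ℝ, ℝ)) (ht : |t| ≤ m) :
    |v t - w t| ≤ theta m v w :=
  le_csSup (isCompact_Icc.image (v.continuous.sub w.continuous).abs).bddAbove
    ⟨t, abs_le.1 ht, rfl⟩

lemma theta_eq_zero_of_eqOn {m : ℕ} {v w : C(ℝ, ℝ)} (h : EqOn v w (Icc (-(m : ℝ)) m)) :
    theta m v w = 0 :=
  le_antisymm (Real.sSup_le (by rintro _ ⟨t, ht, rfl⟩; simp [h ht]) le_rfl)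
    (theta_nonneg m v w)

noncomputable def rhoTerm (v w : C(ℝ, ℝ)) (m : ℕ) : ℝ :=
  theta (m + 1) v w / (1 + theta (m + 1) v w) / 2 ^ (m + 1)

lemma rho_eq_tsum_rhoTerm (v w : C(ℝ, ℝ)) : rho v w = ∑' m, rhoTerm v w m := rfl

lemma rhoTerm_nonneg (v w : C(ℝ, ℝ)) (m : ℕ) : 0 ≤ rhoTerm v w m := by
  have := theta_nonneg (m + 1) v w
  unfold rhoTerm
  positivity

lemma rhoTerm_le (v w : C(ℝ, ℝ)) (m : ℕ) : rhoTerm v w m ≤ 1 / 2 / 2 ^ m := by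
  have := theta_nonneg (m + 1) v w
  calc rhoTerm v w m ≤ 1 / 2 ^ (m + 1) := by
        rw [rhoTerm]
        gcongr
        exact div_le_one_of_le₀ (by linarith) (by linarith)
    _ = 1 / 2 / 2 ^ m := by ring

lemma summable_rhoTerm (v w : C(ℝ, ℝ)) : Summable (rhoTerm v w) :=
  (summable_geometric_two' 1).of_nonneg_of_le (rhoTerm_nonneg v w) (rhoTerm_le v w)

lemma rhoTerm_le_rho (v w : C(ℝ, ℝ)) (m : ℕ) : rhoTerm v w m ≤ rho v w :=
  (summable_rhoTerm v w).le_tsum m fun j _ => rhoTerm_nonneg v w j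

lemma rho_le_of_eqOn {v w : C(ℝ, ℝ)} {M : ℕ} (h : EqOn v w (Icc (-(M : ℝ)) M)) :
    rho v w ≤ 1 / 2 ^ M := by
  have hhead : ∀ m ∈ Finset.range M, rhoTerm v w m = 0 := fun m hm => by
    have hmM : ((m + 1 : ℕ) : ℝ) ≤ M := by exact_mod_cast Finset.mem_range.1 hm
    simp [rhoTerm, theta_eq_zero_of_eqOn (h.mono (Icc_subset_Icc (by linarith) hmM))]
  rw [rho_eq_tsum_rhoTerm, ← (summable_rhoTerm v w).sum_add_tsum_nat_add M,
    Finset.sum_eq_zero hhead, zero_add]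
  calc ∑' m, rhoTerm v w (m + M) ≤ ∑' m : ℕ, 1 / 2 ^ M / 2 / 2 ^ m :=
        (summable_rhoTerm v w).comp_injective (add_left_injective M) |>.tsum_le_tsum
          (fun m => (rhoTerm_le v w _).trans_eq (by ring)) (summable_geometric_two' _)
    _ = 1 / 2 ^ M := tsum_geometric_two' _

lemma exists_forall_eqOn_rho_lt {ε : ℝ} (hε : 0 < ε) :
    ∃ M : ℕ, ∀ v w : C(ℝ, ℝ), EqOn v w (Icc (-(M : ℝ)) M) → rho v w < ε := by
  obtain ⟨M, hM⟩ := exists_pow_lt_of_lt_one hε one_half_lt_one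
  exact ⟨M, fun v w h => (rho_le_of_eqOn h).trans_lt (by rwa [one_div_pow] at hM)⟩

lemma le_rho_of_le_abs_sub {v w : C(ℝ, ℝ)} {c t : ℝ} {m : ℕ} (hc : 0 ≤ c) (ht : |t| ≤ m + 1)
    (h : c ≤ |v t - w t|) : c / (1 + c) / 2 ^ (m + 1) ≤ rho v w := by
  have hθ : c ≤ theta (m + 1) v w := h.trans (abs_sub_le_theta v w (by exact_mod_cast ht))
  have hmono : c / (1 + c) ≤ theta (m + 1) v w / (1 + theta (m + 1) v w) := by
    rw [div_le_div_iff₀ (by positivity) (by linarith)]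
    nlinarith
  calc c / (1 + c) / 2 ^ (m + 1) ≤ rhoTerm v w m := by
        rw [rhoTerm]
        gcongr
    _ ≤ rho v w := rhoTerm_le_rho v w m

def SensitiveOn {α : Type*} (d : α → α → ℝ) (T : α → α) (W : Set α) : Prop :=
  ∃ δ : ℝ, 0 < δ ∧ ∀ w ∈ W, ∀ ε : ℝ, 0 < ε → ∃ v ∈ W, d v w < ε ∧
    ∃ n : ℕ, 1 ≤ n ∧ δ ≤ d (T^[n] v) (T^[n] w)

def flipShift (s : ℤ → Bool) : ℤ → Bool := fun n => !s (n + 1)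

lemma flipShift_surjective : Surjective flipShift :=
  fun s => ⟨fun n => !s (n - 1), by funext n; simp [flipShift]⟩

lemma flipShift_iterate_apply_eq_iff (k : ℕ) (s s' : ℤ → Bool) (n : ℤ) :
    flipShift^[k] s n = flipShift^[k] s' n ↔ s (n + k) = s' (n + k) := by
  induction k generalizing s s' with
  | zero => simp
  | succ k ih =>
    rw [iterate_succ_apply, iterate_succ_apply, ih]
    simp [flipShift, add_assoc]

theorem sensitiveOn_range_of_semiconj_flipShift {α : Type*} {d : α → α → ℝ} {T : α → α}
    {Φ : (ℤ → Bool) → α} (hΦ : Semiconj Φ flipShift T)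
    (hclose : ∀ ε > 0, ∃ N : ℤ, ∀ s s', (∀ n ≤ N, s n = s' n) → d (Φ s) (Φ s') < ε)
    (n₁ : ℤ) {δ : ℝ} (hδ : 0 < δ) (hsep : ∀ s s', s n₁ ≠ s' n₁ → δ ≤ d (Φ s) (Φ s')) :
    SensitiveOn d T (range Φ) := by
  refine ⟨δ, hδ, ?_⟩
  rintro _ ⟨s, rfl⟩ ε hε
  obtain ⟨N, hN⟩ := hclose ε hε
  let s' : ℤ → Bool := fun n => if n ≤ N then s n else !s n
  set k := (N - n₁).toNat + 1
  refine ⟨Φ s', mem_range_self s', hN s' s fun n hn => if_pos hn, k, le_add_self, ?_⟩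
  rw [← (hΦ.iterate_right k).eq, ← (hΦ.iterate_right k).eq]
  refine hsep _ _ fun h => ?_
  have hk : ¬ n₁ + k ≤ N := by omega
  simp [flipShift_iterate_apply_eq_iff, s', hk] at h

lemma Function.Antiperiodic.exists_eq_zero {g : ℝ → ℝ} {c : ℝ} (hg : Antiperiodic g c)
    (hgc : Continuous g) : ∃ t, g t = 0 := by
  have h0 : (0 : ℝ) ∈ uIcc (g 0) (g c) := by
    rw [← zero_add c, hg 0, mem_uIcc]
    rcases le_total (g 0) 0 with h | h
    · exact Or.inl ⟨h, by linarith⟩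
    · exact Or.inr ⟨by linarith, h⟩
  obtain ⟨t, -, ht⟩ := intermediate_value_uIcc hgc.continuousOn h0
  exact ⟨t, ht⟩

lemma Function.Periodic.exists_forall_int_apply_eq_apply_add_one {x : ℝ → ℝ}
    (hx : Periodic x 2) (hxc : Continuous x) : ∃ t₀, ∀ n : ℤ, x (t₀ + n) = x (t₀ + n + 1) := by
  have hg : Antiperiodic (fun t => x (t + 1) - x t) 1 := fun t => by
    simp only [add_assoc, one_add_one_eq_two, hx t]
    ring
  obtain ⟨t₀, ht₀⟩ := hg.exists_eq_zero (by fun_prop)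
  refine ⟨t₀, fun n => ?_⟩
  have := (hg.add_const t₀).int_mul_eq_of_eq_zero (by simpa using ht₀) n
  rw [mul_one, add_comm (n : ℝ) t₀] at this
  linarith

section
variable {f : ℝ × ℝ → ℝ} {x : ℝ → ℝ}

lemma IsSolution.continuous (hx : IsSolution f x) : Continuous x :=
  continuous_iff_continuousAt.2 fun t => (hx t).continuousAt

lemma IsSolution.comp_add_const {c : ℝ} (hx : IsSolution f x)
    (hper : ∀ t x : ℝ, f (t + c, x) = f (t, x)) : IsSolution f (fun t => x (t + c)) :=
  fun t => by simpa [hper] using (hx (t + c)).comp_add_const t c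

end

noncomputable def splice (y z : ℝ → ℝ) (t₀ : ℝ) (s : ℤ → Bool) (t : ℝ) : ℝ :=
  bif s ⌊t - t₀⌋ then y t else z t

section
variable {y z : ℝ → ℝ} {t₀ : ℝ}

lemma splice_apply_of_mem_Icc (hyz : ∀ n : ℤ, y (t₀ + n) = z (t₀ + n)) (s : ℤ → Bool) {n : ℤ}
    {u : ℝ} (hu : u ∈ Icc (t₀ + n) (t₀ + n + 1)) : splice y z t₀ s u = cond (s n) y z u := by
  rcases hu.2.lt_or_eq with hlt | rfl
  · rw [splice, Int.floor_eq_iff.2 ⟨by linarith [hu.1], by linarith⟩]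
    cases s n <;> rfl
  · have hfloor : ⌊t₀ + n + 1 - t₀⌋ = n + 1 := by
      rw [show t₀ + n + 1 - t₀ = ((n + 1 : ℤ) : ℝ) by push_cast; ring, Int.floor_intCast]
    have hyz' : y (t₀ + n + 1) = z (t₀ + n + 1) := by simpa [add_assoc] using hyz (n + 1)
    rw [splice, hfloor]
    cases s (n + 1) <;> cases s n <;> simp [hyz']

lemma splice_eventuallyEq_nhdsLE (hyz : ∀ n : ℤ, y (t₀ + n) = z (t₀ + n)) (s : ℤ → Bool)
    (t : ℝ) : ∃ b : Bool, splice y z t₀ s =ᶠ[𝓝[≤] t] cond b y z := by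
  have h₁ : t₀ + ↑(⌈t - t₀⌉ - 1) < t := by
    push_cast
    linarith [Int.ceil_lt_add_one (t - t₀)]
  have h₂ : t ≤ t₀ + ↑(⌈t - t₀⌉ - 1) + 1 := by
    push_cast
    linarith [Int.le_ceil (t - t₀)]
  exact ⟨_, eventuallyEq_of_mem (Ioc_mem_nhdsLE h₁) fun u hu =>
    splice_apply_of_mem_Icc hyz s ⟨hu.1.le, hu.2.trans h₂⟩⟩

lemma splice_eventuallyEq_nhdsGE (hyz : ∀ n : ℤ, y (t₀ + n) = z (t₀ + n)) (s : ℤ → Bool)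
    (t : ℝ) : ∃ b : Bool, splice y z t₀ s =ᶠ[𝓝[≥] t] cond b y z := by
  have h₁ : t₀ + ⌊t - t₀⌋ ≤ t := by linarith [Int.floor_le (t - t₀)]
  have h₂ : t < t₀ + ⌊t - t₀⌋ + 1 := by linarith [Int.lt_floor_add_one (t - t₀)]
  exact ⟨_, eventuallyEq_of_mem (Ico_mem_nhdsGE h₂) fun u hu =>
    splice_apply_of_mem_Icc hyz s ⟨h₁.trans hu.1, hu.2.le⟩⟩

lemma continuous_splice (hy : Continuous y) (hz : Continuous z)
    (hyz : ∀ n : ℤ, y (t₀ + n) = z (t₀ + n)) (s : ℤ → Bool) : Continuous (splice y z t₀ s) := by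
  have hcond (b : Bool) : Continuous (cond b y z) := by cases b <;> assumption
  refine continuous_iff_continuousAt.2 fun t => continuousAt_iff_continuous_left_right.2 ⟨?_, ?_⟩
  · obtain ⟨b, hb⟩ := splice_eventuallyEq_nhdsLE hyz s t
    exact (hcond b).continuousWithinAt.congr_of_eventuallyEq_of_mem hb self_mem_Iic
  · obtain ⟨b, hb⟩ := splice_eventuallyEq_nhdsGE hyz s t
    exact (hcond b).continuousWithinAt.congr_of_eventuallyEq_of_mem hb self_mem_Ici

lemma isSolution_splice {f : ℝ × ℝ → ℝ} (hy : IsSolution f y) (hz : IsSolution f z)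
    (hyz : ∀ n : ℤ, y (t₀ + n) = z (t₀ + n)) (s : ℤ → Bool) : IsSolution f (splice y z t₀ s) := by
  have hcond (b : Bool) : IsSolution f (cond b y z) := by cases b <;> assumption
  intro t
  have hside {I : Set ℝ} (ht : t ∈ I) (h : ∃ b : Bool, splice y z t₀ s =ᶠ[𝓝[I] t] cond b y z) :
      HasDerivWithinAt (splice y z t₀ s) (f (t, splice y z t₀ s t)) I t := by
    obtain ⟨b, hb⟩ := h
    rw [hb.eq_of_nhdsWithin ht]
    exact (hcond b t).hasDerivWithinAt.congr_of_eventuallyEq_of_mem hb ht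
  have := (hside self_mem_Iic (splice_eventuallyEq_nhdsLE hyz s t)).union
    (hside self_mem_Ici (splice_eventuallyEq_nhdsGE hyz s t))
  rwa [Iic_union_Ici, hasDerivWithinAt_univ] at this

lemma continuous_uncurry_splice (hy : Continuous y) (hz : Continuous z)
    (hyz : ∀ n : ℤ, y (t₀ + n) = z (t₀ + n)) :
    Continuous fun p : (ℤ → Bool) × ℝ => splice y z t₀ p.1 p.2 := by
  refine continuous_iff_continuousAt.2 fun ⟨a, t⟩ => ?_
  set n := ⌊t - t₀⌋
  have hcoord (k : ℤ) : ∀ᶠ p : (ℤ → Bool) × ℝ in 𝓝 (a, t), p.1 k = a k := by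
    have : Continuous fun p : (ℤ → Bool) × ℝ => p.1 k := by fun_prop
    exact (this.continuousAt (x := (a, t))).eventually_mem
      ((isOpen_discrete _).mem_nhds (mem_singleton (a k)))
  have hnear : ∀ᶠ p : (ℤ → Bool) × ℝ in 𝓝 (a, t), p.2 ∈ Ioo (t₀ + (n - 1)) (t₀ + n + 1) :=
    continuousAt_snd.eventually_mem (Ioo_mem_nhds (by linarith [Int.floor_le (t - t₀)])
      (by linarith [Int.lt_floor_add_one (t - t₀)]))
  -- near `t` the floor `⌊u - t₀⌋` only takes the values `n - 1` and `n`
  have hloc : (fun p : (ℤ → Bool) × ℝ => splice y z t₀ a p.2) =ᶠ[𝓝 (a, t)]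
      fun p => splice y z t₀ p.1 p.2 := by
    filter_upwards [hcoord (n - 1), hcoord n, hnear] with ⟨s, u⟩ h₁ h₂ hu
    dsimp only at h₁ h₂ hu
    have : ⌊u - t₀⌋ = n - 1 ∨ ⌊u - t₀⌋ = n := by
      have := Int.floor_lt.2 (show u - t₀ < ↑(n + 1) by push_cast; linarith [hu.2])
      have := Int.le_floor.2 (show ↑(n - 1) ≤ u - t₀ by push_cast; linarith [hu.1])
      omega
    rcases this with h | h <;> simp only [splice, h, h₁, h₂]
  exact ((continuous_splice hy hz hyz a).comp continuous_snd).continuousAt.congr hloc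

lemma splice_eqOn_Iio {N : ℤ} {s s' : ℤ → Bool} (h : ∀ n ≤ N, s n = s' n) :
    EqOn (splice y z t₀ s) (splice y z t₀ s') (Iio (t₀ + N + 1)) := fun t ht => by
  have : ⌊t - t₀⌋ ≤ N := Int.floor_le_iff.2 (by linarith [mem_Iio.1 ht])
  simp only [splice, h _ this]

lemma abs_splice_sub_splice {s s' : ℤ → Bool} {t : ℝ} (h : s ⌊t - t₀⌋ ≠ s' ⌊t - t₀⌋) :
    |splice y z t₀ s t - splice y z t₀ s' t| = |y t - z t| := by
  revert h
  simp only [splice]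
  cases s ⌊t - t₀⌋ <;> cases s' ⌊t - t₀⌋ <;> simp [abs_sub_comm]

end

section
variable {x : ℝ → ℝ} {t₀ : ℝ}

lemma splice_apply_add_one (hx : Periodic x 2) (s : ℤ → Bool) (t : ℝ) :
    splice x (fun t => x (t + 1)) t₀ s (t + 1) =
      splice x (fun t => x (t + 1)) t₀ (flipShift s) t := by
  have hfloor : ⌊t + 1 - t₀⌋ = ⌊t - t₀⌋ + 1 := by rw [← Int.floor_add_one, sub_add_eq_add_sub]
  simp only [splice, flipShift, hfloor]
  cases s (⌊t - t₀⌋ + 1) <;> simp [add_assoc, one_add_one_eq_two, hx t]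

variable {Φ : (ℤ → Bool) → C(ℝ, ℝ)}

lemma semiconj_flipShift_shiftOne (hΦ : ∀ s, ⇑(Φ s) = splice x (fun t => x (t + 1)) t₀ s)
    (hx : Periodic x 2) : Semiconj Φ flipShift shiftOne :=
  fun s => ContinuousMap.ext fun t => by
    change Φ (flipShift s) t = Φ s (t + 1)
    rw [hΦ, hΦ, splice_apply_add_one hx]

theorem sensitiveOn_range_splice (hΦ : ∀ s, ⇑(Φ s) = splice x (fun t => x (t + 1)) t₀ s)
    (hx : Periodic x 2) {t₁ : ℝ} (ht₁ : x (t₁ + 1) ≠ x t₁) :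
    SensitiveOn rho shiftOne (range Φ) := by
  set c := |x t₁ - x (t₁ + 1)|
  have hc : 0 < c := abs_pos.2 (sub_ne_zero.2 ht₁.symm)
  refine sensitiveOn_range_of_semiconj_flipShift (semiconj_flipShift_shiftOne hΦ hx)
    (fun ε hε => ?_) ⌊t₁ - t₀⌋ (δ := c / (1 + c) / 2 ^ (⌈|t₁|⌉₊ + 1))
    (div_pos (div_pos hc (by positivity)) (by positivity)) fun s s' h => ?_
  · obtain ⟨M, hM⟩ := exists_forall_eqOn_rho_lt hε
    refine ⟨⌈(M : ℝ) - t₀⌉, fun s s' h => hM _ _ fun t ht => ?_⟩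
    rw [hΦ, hΦ]
    exact splice_eqOn_Iio h (mem_Iio.2 <| by linarith [ht.2, Int.le_ceil ((M : ℝ) - t₀)])
  · refine le_rho_of_le_abs_sub (t := t₁) hc.le (by linarith [Nat.le_ceil |t₁|]) ?_
    rw [hΦ, hΦ, abs_splice_sub_splice h]

end

theorem sensitive_dependence_general
    (f : ℝ × ℝ → ℝ)
    (hper : ∀ t x : ℝ, f (t + 1, x) = f (t, x))
    (x : ℝ → ℝ) (hx : IsSolution f x)
    (hx2 : ∀ t : ℝ, x (t + 2) = x t)
    (t₁ : ℝ) (ht₁ : x (t₁ + 1) ≠ x t₁) :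
    ∃ W : Set C(ℝ, ℝ), IsCompact W ∧
      (∀ w ∈ W, IsSolution f w) ∧
      shiftOne '' W = W ∧
      ∃ δ : ℝ, 0 < δ ∧
        ∀ w ∈ W, ∀ ε : ℝ, 0 < ε → ∃ v ∈ W, rho v w < ε ∧
          ∃ n : ℕ, 1 ≤ n ∧ δ ≤ rho (shiftOne^[n] v) (shiftOne^[n] w) := by
  have hx₁ := hx.comp_add_const hper
  obtain ⟨t₀, ht₀⟩ := Periodic.exists_forall_int_apply_eq_apply_add_one hx2 hx.continuous
  let Φ : C(ℤ → Bool, C(ℝ, ℝ)) :=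
    ContinuousMap.curry ⟨_, continuous_uncurry_splice hx.continuous hx₁.continuous ht₀⟩
  have hΦ : ∀ s, ⇑(Φ s) = splice x (fun t => x (t + 1)) t₀ s := fun _ => rfl
  refine ⟨range Φ, isCompact_range Φ.continuous, ?_, ?_, sensitiveOn_range_splice hΦ hx2 ht₁⟩
  · rintro _ ⟨s, rfl⟩
    rw [hΦ]
    exact isSolution_splice hx hx₁ ht₀ s
  · rw [← range_comp, ← (semiconj_flipShift_shiftOne hΦ hx2).comp_eq,
      flipShift_surjective.range_comp]

theorem sensitive_dependence
    (f : ℝ × ℝ → ℝ) (hf : Continuous f)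
    (hper : ∀ t x : ℝ, f (t + 1, x) = f (t, x))
    (x : ℝ → ℝ) (hx : IsSolution f x)
    (hx2 : ∀ t : ℝ, x (t + 2) = x t)
    (t₁ : ℝ) (ht₁ : x (t₁ + 1) ≠ x t₁) :
    ∃ W : Set C(ℝ, ℝ), IsCompact W ∧
      (∀ w ∈ W, IsSolution f w) ∧
      shiftOne '' W = W ∧
      ∃ δ : ℝ, 0 < δ ∧
        ∀ w ∈ W, ∀ ε : ℝ, 0 < ε → ∃ v ∈ W, rho v w < ε ∧
          ∃ n : ℕ, 1 ≤ n ∧ δ ≤ rho (shiftOne^[n] v) (shiftOne^[n] w) :=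
  sensitive_dependence_general f hper x hx hx2 t₁ ht₁
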